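/- Let M be a von Neumann algebra with normal faithful state φ, and B ⊆ M a σ^φ-invariant von Neumann subalgebra with φ-preserving conditional expectation E^φ_B. For any selfadjoint contraction a ∈ M with 0 ≤ a ≤ 1, the spectral projection f := 1_{[1/2,1]}(E^φ_B(a)) satisfies ‖f − e‖_φ ≤ 7 ‖e − E^φ_B(a)‖_φ whenever e ∈ M is a projection with a = e (i.e., for any projection e ∈ M, the projection f = 1_{[1/2,1]}(E^φ_B(e)) ∈ B satisfies ‖f − e‖_φ ≤ 7 ‖e − E^φ_B(e)‖_φ). -/

import Mathlib

open scoped ComplexOrder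
open Filter

noncomputable section

namespace HoudayerPopa

variable (H : Type) [NormedAddCommGroup H] [InnerProductSpace ℂ H] [CompleteSpace H]

/-- Bounded operators on `H`. -/
abbrev BH := H →L[ℂ] H

variable {H}

/-- A normal faithful state on a von Neumann algebra `M ⊆ B(H)`.  Normality is encoded by the
standard characterization: the state is implemented by a square-summable sequence of vectors. -/
structure NFState (M : VonNeumannAlgebra H) where
  toFun : BH H →ₗ[ℂ] ℂ
  map_one' : toFun 1 = 1
  pos' : ∀ x : BH H, 0 ≤ toFun (star x * x)
  faithful' : ∀ x ∈ M, toFun (star x * x) = 0 → x = 0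
  normal' : ∃ ξ : ℕ → H, Summable (fun n => ‖ξ n‖ ^ 2) ∧
      ∀ x : BH H, toFun x = ∑' n, (inner ℂ (ξ n) (x (ξ n)) : ℂ)

/-- The GNS (`L²`) norm `‖x‖_φ = φ(x*x)^{1/2}` associated with a state. -/
def φnorm {M : VonNeumannAlgebra H} (φ : NFState M) (x : BH H) : ℝ :=
  Real.sqrt (φ.toFun (star x * x)).re

/-- `p` is an (orthogonal) projection. -/
def IsProjection (p : BH H) : Prop := IsSelfAdjoint p ∧ p * p = p

/-- `u` is a unitary. -/
def IsUnitaryOp (u : BH H) : Prop := star u * u = 1 ∧ u * star u = 1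

/-- The relative commutant `S' ∩ T` of a set `S` inside a set `T`. -/
def relComm (S T : Set (BH H)) : Set (BH H) := {x | x ∈ T ∧ ∀ s ∈ S, s * x = x * s}

/-- A (unital) *-subalgebra, as a subset. -/
def IsStarSubalgebraSet (S : Set (BH H)) : Prop :=
  (1 : BH H) ∈ S ∧ (∀ x ∈ S, ∀ y ∈ S, x + y ∈ S) ∧ (∀ (c : ℂ), ∀ x ∈ S, c • x ∈ S) ∧
    (∀ x ∈ S, ∀ y ∈ S, x * y ∈ S) ∧ (∀ x ∈ S, star x ∈ S)

/-- Abelian subset. -/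
def IsAbelianSet (S : Set (BH H)) : Prop := ∀ x ∈ S, ∀ y ∈ S, x * y = y * x

/-- The centralizer `M_φ = {x ∈ M : φ(xy) = φ(yx) ∀ y ∈ M}` of a normal faithful state,
which coincides with the fixed-point algebra of the modular flow `σ^φ`. -/
def stateCentralizer (M : VonNeumannAlgebra H) (φ : NFState M) : Set (BH H) :=
  {x | x ∈ M ∧ ∀ y ∈ M, φ.toFun (x * y) = φ.toFun (y * x)}

/-- The set of scalar operators `ℂ1`. -/
def Scalars (H : Type) [NormedAddCommGroup H] [InnerProductSpace ℂ H] [CompleteSpace H] :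
    Set (BH H) := {x | ∃ c : ℂ, x = c • (1 : BH H)}

/-- The modular automorphism group `σ^φ` of a normal faithful state `φ` on `M`, characterized
by the KMS condition. -/
structure ModularFlow (M : VonNeumannAlgebra H) (φ : NFState M) where
  σ : ℝ → BH H → BH H
  σ_zero' : σ 0 = id
  σ_add' : ∀ s t x, σ (s + t) x = σ s (σ t x)
  mem' : ∀ t, ∀ x ∈ M, σ t x ∈ M
  linear' : ∀ t, IsLinearMap ℂ (σ t)
  map_mul' : ∀ t x y, σ t (x * y) = σ t x * σ t y
  map_star' : ∀ t x, σ t (star x) = star (σ t x)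
  invariant' : ∀ t x, φ.toFun (σ t x) = φ.toFun x
  continuous' : ∀ x ∈ M, ∀ ξ : H, Continuous fun t => σ t x ξ
  kms' : ∀ x ∈ M, ∀ y ∈ M, ∃ F : ℂ → ℂ,
      ContinuousOn F {z | 0 ≤ z.im ∧ z.im ≤ 1} ∧
      DifferentiableOn ℂ F {z | 0 < z.im ∧ z.im < 1} ∧
      (∀ t : ℝ, F t = φ.toFun (σ t x * y)) ∧
      (∀ t : ℝ, F (t + Complex.I) = φ.toFun (y * σ t x))

/-- `x` is entire analytic for the modular flow. -/
def IsEntireAnalytic {M : VonNeumannAlgebra H} {φ : NFState M} (m : ModularFlow M φ)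
    (v : BH H) : Prop :=
  ∃ G : ℂ → BH H, Differentiable ℂ G ∧ ∀ t : ℝ, G t = m.σ t v

/-- A `φ`-preserving conditional expectation from (the subset) `D` onto `S ⊆ D`. -/
structure CondExpOn (φ : BH H →ₗ[ℂ] ℂ) (D S : Set (BH H)) where
  E : BH H →ₗ[ℂ] BH H
  mem' : ∀ x ∈ D, E x ∈ S
  fix' : ∀ x ∈ S, E x = x
  pos' : ∀ x : BH H, x.IsPositive → (E x).IsPositive
  preserve' : ∀ x ∈ D, φ (E x) = φ x
  bimod' : ∀ a ∈ S, ∀ x ∈ D, ∀ b ∈ S, E (a * x * b) = a * E x * b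

/-- Normality (σ-weak continuity) of a map on `D`: it preserves the class of functionals
implemented by square-summable sequences of vectors. -/
def IsNormalMapFun (D : Set (BH H)) (T : BH H → BH H) : Prop :=
  ∀ ξ : ℕ → H, Summable (fun n => ‖ξ n‖ ^ 2) →
    ∃ η : ℕ → H, Summable (fun n => ‖η n‖ ^ 2) ∧
      ∀ x ∈ D, (∑' n, (inner ℂ (ξ n) (T x (ξ n)) : ℂ)) = ∑' n, (inner ℂ (η n) (x (η n)) : ℂ)

/-- A normal faithful conditional expectation from `M` onto the subset `S`. -/
structure NormalCondExp (M : VonNeumannAlgebra H) (S : Set (BH H)) where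
  E : BH H →ₗ[ℂ] BH H
  mem' : ∀ x ∈ M, E x ∈ S
  fix' : ∀ x ∈ S, E x = x
  pos' : ∀ x : BH H, x.IsPositive → (E x).IsPositive
  bimod' : ∀ a ∈ S, ∀ x ∈ M, ∀ b ∈ S, E (a * x * b) = a * E x * b
  normal' : IsNormalMapFun (M : Set (BH H)) E
  faithful' : ∀ x ∈ M, x.IsPositive → E x = 0 → x = 0

/-- `M` is a factor: its center is trivial. -/
def IsFactor (M : VonNeumannAlgebra H) : Prop :=
  relComm (M : Set (BH H)) (M : Set (BH H)) ⊆ Scalars H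

/-- `M` is a type III₁ factor.  We use the Connes–Størmer characterization: a factor
(other than `ℂ`) is of type III₁ if and only if its normal state space is homogeneous,
i.e. any two normal faithful states are approximately unitarily equivalent in norm. -/
def IsTypeIII₁Factor (M : VonNeumannAlgebra H) : Prop :=
  IsFactor M ∧ (M : Set (BH H)) ≠ Scalars H ∧
    ∀ φ ψ : NFState M, ∀ ε : ℝ, 0 < ε → ∃ u ∈ M, IsUnitaryOp u ∧
      ∀ x ∈ M, ‖x‖ ≤ 1 → ‖ψ.toFun x - φ.toFun (star u * x * u)‖ < ε

/-- The norm `‖xφ - φx‖` of the commutator of `x ∈ M` with the state `φ`, in the predual. -/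
def commNorm (M : VonNeumannAlgebra H) (φ : NFState M) (x : BH H) : ℝ :=
  sSup {r | ∃ y ∈ M, ‖y‖ ≤ 1 ∧ r = ‖φ.toFun (y * x) - φ.toFun (x * y)‖}

/-- Bounded sequences in `M` asymptotically commuting with `φ` in the predual norm. -/
def AC (M : VonNeumannAlgebra H) (φ : NFState M) : Set (ℕ → BH H) :=
  {x | (∀ n, x n ∈ M) ∧ (∃ C : ℝ, ∀ n, ‖x n‖ ≤ C) ∧
    Tendsto (fun n => commNorm M φ (x n)) atTop (nhds 0)}

/-- Connes' bicentralizer `B(M, φ)`. -/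
def Bicentralizer (M : VonNeumannAlgebra H) (φ : NFState M) : Set (BH H) :=
  {a | a ∈ M ∧ ∀ x ∈ AC M φ,
    Tendsto (fun n => φnorm φ (x n * a - a * x n)) atTop (nhds 0)}

/-- Connes' Bicentralizer Property. -/
def HasCBP (M : VonNeumannAlgebra H) : Prop :=
  ∃ φ : NFState M, Bicentralizer M φ = Scalars H

/-- `A` is a maximal abelian *-subalgebra of `M`: `A` is abelian and `A' ∩ M = A`. -/
def IsMasaIn (A : Set (BH H)) (M : VonNeumannAlgebra H) : Prop :=
  A ⊆ (M : Set (BH H)) ∧ IsStarSubalgebraSet A ∧ IsAbelianSet A ∧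
    relComm A (M : Set (BH H)) = A

/-- `A` is singular in `M`: every unitary of `M` normalizing `A` lies in `A`. -/
def IsSingularIn (A : Set (BH H)) (M : VonNeumannAlgebra H) : Prop :=
  ∀ u ∈ M, IsUnitaryOp u → (∀ a ∈ A, u * a * star u ∈ A) →
    (∀ a ∈ A, star u * a * u ∈ A) → u ∈ A

/-- The corner `eMe`. -/
def cornerSet (M : VonNeumannAlgebra H) (e : BH H) : Set (BH H) :=
  {x | x ∈ M ∧ e * x * e = x}


/-- Bounded sequences in `M` converging to `0` *-strongly along `ω` (using the metric
`‖·‖²_φ + ‖·*‖²_φ` for the strong* topology on bounded sets). -/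
def IωSeq (M : VonNeumannAlgebra H) (φ : NFState M) (ω : Filter ℕ) : Set (ℕ → BH H) :=
  {x | (∀ n, x n ∈ M) ∧ (∃ C : ℝ, ∀ n, ‖x n‖ ≤ C) ∧
    Tendsto (fun n => (φ.toFun (star (x n) * x n) + φ.toFun (x n * star (x n))).re)
      ω (nhds 0)}

/-- The `ω`-multiplier sequences of `M`. -/
def MultSeq (M : VonNeumannAlgebra H) (φ : NFState M) (ω : Filter ℕ) : Set (ℕ → BH H) :=
  {x | (∀ n, x n ∈ M) ∧ (∃ C : ℝ, ∀ n, ‖x n‖ ≤ C) ∧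
    ∀ y ∈ IωSeq M φ ω,
      (fun n => x n * y n) ∈ IωSeq M φ ω ∧ (fun n => y n * x n) ∈ IωSeq M φ ω}

/-- The Ocneanu ultraproduct `M^ω = M^ω(M)/I_ω(M)`, axiomatized: a von Neumann algebra `Mω`
on a Hilbert space `K` together with the quotient map `π` from multiplier sequences, with
kernel `I_ω`, and the ultraproduct state `φω = lim_ω φ`. -/
structure OcneanuUltraproduct (M : VonNeumannAlgebra H) (φ : NFState M) (ω : Filter ℕ)
    (K : Type) [NormedAddCommGroup K] [InnerProductSpace ℂ K] [CompleteSpace K] where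
  Mω : VonNeumannAlgebra K
  π : (ℕ → BH H) → BH K
  mem' : ∀ x ∈ MultSeq M φ ω, π x ∈ Mω
  surj' : ∀ y ∈ Mω, ∃ x ∈ MultSeq M φ ω, π x = y
  add' : ∀ x ∈ MultSeq M φ ω, ∀ y ∈ MultSeq M φ ω, π (x + y) = π x + π y
  smul' : ∀ (c : ℂ), ∀ x ∈ MultSeq M φ ω, π (c • x) = c • π x
  mul' : ∀ x ∈ MultSeq M φ ω, ∀ y ∈ MultSeq M φ ω, π (x * y) = π x * π y
  star' : ∀ x ∈ MultSeq M φ ω, π (fun n => star (x n)) = star (π x)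
  one' : π (fun _ => 1) = 1
  ker' : ∀ x ∈ MultSeq M φ ω, (π x = 0 ↔ x ∈ IωSeq M φ ω)
  φω : BH K →ₗ[ℂ] ℂ
  φω_lim' : ∀ x ∈ MultSeq M φ ω, Tendsto (fun n => φ.toFun (x n)) ω (nhds (φω (π x)))
  φω_state' : φω 1 = 1 ∧ (∀ y : BH K, 0 ≤ φω (star y * y)) ∧
    ∀ y ∈ Mω, φω (star y * y) = 0 → y = 0

end HoudayerPopa

open HoudayerPopa

/-!
Write `b = E(e)`, so `0 ≤ b ≤ 1`. Since `f` commutes with `b`, with `b ≥ 1/2` under `f` and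
`b ≤ 1/2` under `1 - f`, the operator inequality `(f - b)² ≤ 2(b - b²)` holds: the difference
is a sum of products of commuting positive operators. As `E` is `φ`-preserving and
`B`-bimodular, `φ(b - b²) = ‖e - b‖²_φ`, hence `‖f - b‖²_φ ≤ 2‖e - b‖²_φ`, and the
parallelogram inequality gives `‖f - e‖²_φ ≤ 6‖e - b‖²_φ`.
-/

section CStarAlgebra

variable {A : Type*} [CStarAlgebra A] [PartialOrder A] [StarOrderedRing A]

theorem IsStarProjection.sub_mul_self_le {f b : A} (hf : IsStarProjection f)
    (hfb : Commute f b) (hb₀ : 0 ≤ b) (hb₁ : b ≤ 1) (hfb₁ : 0 ≤ 2 * (f * b) - f)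
    (hfb₂ : 0 ≤ (1 - f) - 2 * ((1 - f) * b)) :
    (f - b) * (f - b) ≤ 2 * (b - b * b) := by
  have h1b : 0 ≤ 1 - b := sub_nonneg.mpr hb₁
  have hb1b : Commute b (1 - b) := (Commute.one_right b).sub_right (Commute.refl b)
  have hf1b : Commute f (1 - b) := (Commute.one_right f).sub_right hfb
  have h1fb : Commute (1 - f) b := (Commute.one_left b).sub_left hfb
  have h1f1b : Commute (1 - f) (1 - b) := (Commute.one_right _).sub_right h1fb
  have key : 2 * (b - b * b) - (f - b) * (f - b) =
      (2 * (f * b) - f) * (1 - b) + f * (b * (1 - b)) +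
        ((1 - f) - 2 * ((1 - f) * b)) * b + (1 - f) * ((1 - b) * b) := by
    have h : 2 * (b - b * b) - (f - b) * (f - b) -
        ((2 * (f * b) - f) * (1 - b) + f * (b * (1 - b)) +
          ((1 - f) - 2 * ((1 - f) * b)) * b + (1 - f) * ((1 - b) * b)) =
        (b * f - f * b) - (f * f - f) := by
      noncomm_ring
    rwa [hf.isIdempotentElem.eq, ← hfb.eq, sub_self, sub_self, sub_zero, sub_eq_zero] at h
  rw [← sub_nonneg, key]
  have hX : 0 ≤ (2 * (f * b) - f) * (1 - b) :=
    (((Commute.ofNat_left 2 _).mul_left (hf1b.mul_left hb1b)).sub_left hf1b).mul_nonneg hfb₁ h1b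
  have hY : 0 ≤ ((1 - f) - 2 * ((1 - f) * b)) * b :=
    (h1fb.sub_left ((Commute.ofNat_left 2 _).mul_left (h1fb.mul_left (Commute.refl b)))).mul_nonneg
      hfb₂ hb₀
  have hfbb : 0 ≤ f * (b * (1 - b)) :=
    (hfb.mul_right hf1b).mul_nonneg hf.nonneg (hb1b.mul_nonneg hb₀ h1b)
  have hf'bb : 0 ≤ (1 - f) * ((1 - b) * b) :=
    (h1f1b.mul_right h1fb).mul_nonneg hf.one_sub_nonneg (hb1b.symm.mul_nonneg h1b hb₀)
  exact add_nonneg (add_nonneg (add_nonneg hX hfbb) hY) hf'bb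

end CStarAlgebra

namespace HoudayerPopa

variable {H : Type} [NormedAddCommGroup H] [InnerProductSpace ℂ H]

namespace CondExpOn

variable {φ : BH H →ₗ[ℂ] ℂ} {D S : Set (BH H)} (E : CondExpOn φ D S)

theorem apply_nonneg {x : BH H} (hx : 0 ≤ x) : 0 ≤ E.E x := by
  rw [ContinuousLinearMap.nonneg_iff_isPositive] at hx ⊢
  exact E.pos' x hx

theorem map_mul_apply_right (hS : 1 ∈ S) {x s : BH H} (hx : x ∈ D) (hs : s ∈ S)
    (hxs : x * s ∈ D) : φ (x * s) = φ (E.E x * s) := by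
  simpa using (E.preserve' _ hxs).symm.trans (congrArg φ (E.bimod' 1 hS x hx s hs))

theorem map_mul_apply_left (hS : 1 ∈ S) {x s : BH H} (hx : x ∈ D) (hs : s ∈ S)
    (hsx : s * x ∈ D) : φ (s * x) = φ (s * E.E x) := by
  simpa using (E.preserve' _ hsx).symm.trans (congrArg φ (E.bimod' s hs x hx 1 hS))

end CondExpOn

variable [CompleteSpace H]

theorem IsProjection.isStarProjection {p : BH H} (hp : IsProjection p) : IsStarProjection p :=
  ⟨hp.2, hp.1⟩

namespace NFState

variable {M : VonNeumannAlgebra H} (φ : NFState M)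

theorem map_nonneg {x : BH H} (hx : 0 ≤ x) : 0 ≤ φ.toFun x := by
  rw [StarOrderedRing.nonneg_iff] at hx
  induction hx using AddSubmonoid.closure_induction with
  | mem x hx => obtain ⟨s, rfl⟩ := hx; exact φ.pos' s
  | zero => simp
  | add x y _ _ hx hy => simpa using add_nonneg hx hy

theorem map_mono {x y : BH H} (h : x ≤ y) : φ.toFun x ≤ φ.toFun y := by
  simpa using φ.map_nonneg (sub_nonneg.mpr h)

end NFState

section φnorm

variable {M : VonNeumannAlgebra H} (φ : NFState M)

theorem φnorm_sq (x : BH H) : φnorm φ x ^ 2 = (φ.toFun (star x * x)).re :=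
  Real.sq_sqrt (Complex.re_le_re (φ.pos' x))

theorem φnorm_sub_sq_le (x y : BH H) :
    φnorm φ (x - y) ^ 2 ≤ 2 * φnorm φ x ^ 2 + 2 * φnorm φ y ^ 2 := by
  have h : star (x - y) * (x - y) ≤ 2 * (star x * x) + 2 * (star y * y) := by
    have h : 2 * (star x * x) + 2 * (star y * y) - star (x - y) * (x - y) =
        star (x + y) * (x + y) := by
      simp only [star_add, star_sub]
      noncomm_ring
    rw [← sub_nonneg, h]
    exact star_mul_self_nonneg _
  simpa only [φnorm_sq, two_mul, map_add, Complex.add_re] using Complex.re_le_re (φ.map_mono h)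

end φnorm

namespace CondExpOn

variable {φ : BH H →ₗ[ℂ] ℂ} {S : Set (BH H)}

theorem apply_le_one {D : Set (BH H)} (E : CondExpOn φ D S) (hS : 1 ∈ S) {x : BH H}
    (hx : x ≤ 1) : E.E x ≤ 1 := by
  simpa [E.fix' 1 hS] using E.apply_nonneg (sub_nonneg.mpr hx)

theorem map_sub_apply_mul_self {M : VonNeumannAlgebra H} (E : CondExpOn φ M S) (hS : 1 ∈ S)
    (hSM : S ⊆ M) {e : BH H} (he : e ∈ M) (hee : IsIdempotentElem e) :
    φ ((e - E.E e) * (e - E.E e)) = φ (E.E e - E.E e * E.E e) := by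
  have hb : E.E e ∈ M := hSM (E.mem' e he)
  have heb := E.map_mul_apply_right hS he (E.mem' e he) (mul_mem he hb)
  have hbe := E.map_mul_apply_left hS he (E.mem' e he) (mul_mem hb he)
  have hexp : (e - E.E e) * (e - E.E e) = e * e - e * E.E e - E.E e * e + E.E e * E.E e := by
    noncomm_ring
  rw [hexp, hee.eq, map_add, map_sub, map_sub, map_sub, heb, hbe, E.preserve' e he]
  ring

end CondExpOn

end HoudayerPopa

theorem stmt5_general
    {H : Type} [NormedAddCommGroup H] [InnerProductSpace ℂ H] [CompleteSpace H]
    (M : VonNeumannAlgebra H) (φ : NFState M)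
    (S : Set (BH H)) (hS : IsStarSubalgebraSet S) (hSM : S ⊆ (M : Set (BH H)))
    (E : CondExpOn φ.toFun (M : Set (BH H)) S)
    (e : BH H) (he : e ∈ M) (heproj : IsProjection e)
    (f : BH H) (hfproj : IsProjection f)
    (hcomm : f * E.E e = E.E e * f)
    (hge : ((2 : ℂ) • (f * E.E e) - f).IsPositive)
    (hle : ((1 - f) - (2 : ℂ) • ((1 - f) * E.E e)).IsPositive) :
    φnorm φ (f - e) ≤ 7 * φnorm φ (e - E.E e) := by
  set b := E.E e
  have he' := heproj.isStarProjection
  have hf' := hfproj.isStarProjection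
  have hb₀ : 0 ≤ b := E.apply_nonneg he'.nonneg
  have hop : (f - b) * (f - b) ≤ 2 * (b - b * b) := by
    refine hf'.sub_mul_self_le hcomm hb₀ (E.apply_le_one hS.1 he'.le_one) ?_ ?_
    · simpa only [two_smul, two_mul] using (ContinuousLinearMap.nonneg_iff_isPositive _).mpr hge
    · simpa only [two_smul, two_mul] using (ContinuousLinearMap.nonneg_iff_isPositive _).mpr hle
  have hfb : φnorm φ (f - b) ^ 2 ≤ 2 * φnorm φ (e - b) ^ 2 := by
    have h := Complex.re_le_re (φ.map_mono hop)
    rw [two_mul, map_add, ← E.map_sub_apply_mul_self hS.1 hSM he he'.isIdempotentElem] at h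
    rw [φnorm_sq, φnorm_sq, (hf'.isSelfAdjoint.sub hb₀.isSelfAdjoint).star_eq,
      (he'.isSelfAdjoint.sub hb₀.isSelfAdjoint).star_eq, two_mul]
    simpa only [Complex.add_re] using h
  have hfe : φnorm φ (f - e) ^ 2 ≤ 6 * φnorm φ (e - b) ^ 2 := by
    have h := φnorm_sub_sq_le φ (f - b) (e - b)
    rw [sub_sub_sub_cancel_right] at h
    linarith
  have h₀ : 0 ≤ φnorm φ (e - b) := Real.sqrt_nonneg _
  exact le_of_pow_le_pow_left₀ two_ne_zero (by positivity) (by nlinarith)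

/-- Popa's Lemma 1.4 in [Po82], property (P1): for a projection `e ∈ M`,
the spectral projection `f = 1_{[1/2,1]}(E^φ_B(e)) ∈ B` satisfies
`‖f - e‖_φ ≤ 7 ‖e - E^φ_B(e)‖_φ`.  The spectral projection is characterized by:
`f ∈ B` is a projection commuting with `b := E^φ_B(e)`, with `2fb ≥ f` and
`2(1-f)b ≤ 1-f`. -/
theorem stmt5
    {H : Type} [NormedAddCommGroup H] [InnerProductSpace ℂ H] [CompleteSpace H]
    (M : VonNeumannAlgebra H) (φ : NFState M) (m : ModularFlow M φ)
    (S : Set (BH H)) (hS : IsStarSubalgebraSet S) (hSM : S ⊆ (M : Set (BH H)))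
    (hSinv : ∀ t, ∀ x ∈ S, m.σ t x ∈ S)
    (E : CondExpOn φ.toFun (M : Set (BH H)) S)
    (e : BH H) (he : e ∈ M) (heproj : IsProjection e)
    (f : BH H) (hf : f ∈ S) (hfproj : IsProjection f)
    (hcomm : f * E.E e = E.E e * f)
    (hge : ((2 : ℂ) • (f * E.E e) - f).IsPositive)
    (hle : ((1 - f) - (2 : ℂ) • ((1 - f) * E.E e)).IsPositive) :
    φnorm φ (f - e) ≤ 7 * φnorm φ (e - E.E e) :=
  stmt5_general M φ S hS hSM E e he heproj f hfproj hcomm hge hle
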